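/- Let (δ,μ) be a left cellular pair and w ∈ W. Then ℒ(δ(w)) = ℒ(w), where ℒ(w) = {s ∈ S : ℓ(sw) < ℓ(w)} is the left descent set. Symmetrically, if (δ,μ) is a right cellular pair then ℛ(δ(w)) = ℛ(w), where ℛ(w) = {s ∈ S : ℓ(ws) < ℓ(w)}. -/

import Mathlib

/-!
Fix `s = s_i` with weight `φ = φ(s)`. A left cellular pair preserves every diagonal coefficient
`[C_x] (a C_x)`, because `μ_x² = 1`; take `a = T_s`. Since
`T_s T_u = T_{su} + [su < u] (v^φ - v^{-φ}) T_u` and `C_x ∈ T_x + H_{<0}`, the standard coordinates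
of `T_s C_x` have degree `≤ φ`, and the `v^φ`-coefficient of its `T_x`-coordinate is `1` if
`sx < x` and `0` otherwise. As every `C_y ≡ T_y` modulo `H_{<0}`, an element whose standard
coordinates have degree `≤ γ` has Kazhdan–Lusztig coordinates of degree `≤ γ` with the same
`v^γ`-coefficients (compare top degrees). So the `v^φ`-coefficient of `[C_x] (T_s C_x)` detects
whether `s` is a left descent of `x`, and it takes the same value at `x = w` and `x = δ(w)`.
Right descents are the mirror image, with `C_x T_s`.
-/

open scoped Classical

noncomputable section

namespace CellsCacti

/-- The group algebra `A = ℤ[𝔄]` of a totally ordered abelian group `𝔄`,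
written exponentially: `A = ⊕_{a ∈ 𝔄} ℤ vᵃ`. -/
abbrev GA (𝔄 : Type*) [AddCommGroup 𝔄] [LinearOrder 𝔄] [IsOrderedAddMonoid 𝔄] := AddMonoidAlgebra ℤ 𝔄

variable {𝔄 : Type*} [AddCommGroup 𝔄] [LinearOrder 𝔄] [IsOrderedAddMonoid 𝔄]

/-- The element `vᵃ` of `A = ℤ[𝔄]`. -/
def v (a : 𝔄) : GA 𝔄 := AddMonoidAlgebra.single a 1

/-- The bar involution of `A = ℤ[𝔄]`, determined by `vᵃ ↦ v⁻ᵃ`. -/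
def Abar : GA 𝔄 ≃ₐ[ℤ] GA 𝔄 := AddMonoidAlgebra.domCongr ℤ ℤ (AddEquiv.neg 𝔄)

/-- `A_{<0} = ⊕_{a<0} ℤ vᵃ`, as a predicate on elements of `A`. -/
def Aneg (a : GA 𝔄) : Prop := ∀ γ ∈ a.coeff.support, γ < (0 : 𝔄)

variable {B : Type*} {W : Type*} [Group W] {M : CoxeterMatrix B}

/-- The Iwahori–Hecke algebra `H = H(W,S,φ)` of a Coxeter system `(W,S)` (encoded by
a Mathlib `CoxeterSystem`) with weight function `φ`, together with its standard basis
`(T_w)`, the bar involution, and the Kazhdan–Lusztig basis `(C_w)`.  `H` is a ring and a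
module over `A = ℤ[𝔄]`, the two structures being compatible. -/
structure Hecke (cs : CoxeterSystem M W) (𝔄 : Type*) [AddCommGroup 𝔄] [LinearOrder 𝔄] [IsOrderedAddMonoid 𝔄]
    (φ : B → 𝔄) (H : Type*) [Ring H] [Module (GA 𝔄) H] : Type _ where
  /-- `φ` is a positive weight function. -/
  φ_pos : ∀ i : B, 0 < φ i
  /-- `φ` is constant on conjugacy classes of simple reflections. -/
  φ_conj : ∀ i j : B, (∃ w : W, w * cs.simple i * w⁻¹ = cs.simple j) → φ i = φ j
  /-- Scalars commute with left multiplication. -/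
  smul_mul : ∀ (a : GA 𝔄) (x y : H), (a • x) * y = a • (x * y)
  /-- Scalars commute with right multiplication. -/
  mul_smul : ∀ (a : GA 𝔄) (x y : H), x * (a • y) = a • (x * y)
  /-- The standard basis `(T_w)_{w ∈ W}` of `H`. -/
  T : Module.Basis W (GA 𝔄) H
  T_one : T 1 = 1
  /-- `T_w T_{w'} = T_{w w'}` when lengths add. -/
  T_mul : ∀ w w' : W, cs.length (w * w') = cs.length w + cs.length w' →
    T w * T w' = T (w * w')
  /-- The quadratic relation `(T_s - v^{φ(s)})(T_s + v^{-φ(s)}) = 0`. -/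
  T_quad : ∀ i : B,
    (T (cs.simple i) - v (φ i) • 1) * (T (cs.simple i) + v (-(φ i)) • 1) = 0
  /-- The bar involution of `H`, an `Abar`-semilinear involutive ring automorphism
  with `bar T_w = T_{w⁻¹}⁻¹` (equivalently, determined by its values on the `T_s`). -/
  bar : H ≃+ H
  bar_mul : ∀ x y : H, bar (x * y) = bar x * bar y
  bar_smul : ∀ (a : GA 𝔄) (x : H), bar (a • x) = Abar a • bar x
  bar_invol : ∀ x : H, bar (bar x) = x
  bar_T : ∀ i : B, bar (T (cs.simple i)) = T (cs.simple i) + (v (-(φ i)) - v (φ i)) • 1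
  /-- The Kazhdan–Lusztig basis `(C_w)_{w ∈ W}` of `H`. -/
  C : Module.Basis W (GA 𝔄) H
  /-- Each `C_w` is invariant under the bar involution. -/
  C_bar : ∀ w : W, bar (C w) = C w
  /-- `C_w ≡ T_w` modulo `H_{<0} = ⊕_w A_{<0} T_w`. -/
  C_T : ∀ w u : W, Aneg (T.repr (C w - T w) u)

namespace Hecke

variable {cs : CoxeterSystem M W} {φ : B → 𝔄} {H : Type*} [Ring H] [Module (GA 𝔄) H]

/-- The standard parabolic subgroup `W_I`, as a subset of `W`. -/
def parab (cs : CoxeterSystem M W) (I : Set B) : Set W :=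
  (Subgroup.closure (cs.simple '' I) : Subgroup W)

/-- `x ∈ X_I`: `x` has minimal length in the coset `x W_I`. -/
def IsMinRep (cs : CoxeterSystem M W) (I : Set B) (x : W) : Prop :=
  ∀ u ∈ parab cs I, cs.length x ≤ cs.length (x * u)

/-- The `A`-span of the `C_w` for `w` in a subset `P ⊆ W`; for `P = W_I` this is the
parabolic subalgebra `H_I` (whose Kazhdan–Lusztig basis is `(C_w)_{w ∈ W_I}`). -/
def Cspan (h : Hecke cs 𝔄 φ H) (P : Set W) : Submodule (GA 𝔄) H :=
  Submodule.span (GA 𝔄) (h.C '' P)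

/-- The `A`-span of the `T_w` for `w` in a subset `P ⊆ W`; for `P = W_I` this is the
parabolic subalgebra `H_I`. -/
def Tspan (h : Hecke cs 𝔄 φ H) (P : Set W) : Submodule (GA 𝔄) H :=
  Submodule.span (GA 𝔄) (h.T '' P)

/-- The preorder `≤_L` of `(W_P, P, φ_P)` (take `P = Set.univ` for that of `(W,S,φ)`):
the finest preorder such that each `⊕_{x ≤_L w} A C_x` is a left ideal. -/
def leftLE (h : Hecke cs 𝔄 φ H) (P : Set W) : W → W → Prop :=
  Relation.ReflTransGen
    (fun x y => x ∈ P ∧ y ∈ P ∧ ∃ a ∈ h.Cspan P, h.C.repr (a * h.C y) x ≠ 0)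

/-- The preorder `≤_R`. -/
def rightLE (h : Hecke cs 𝔄 φ H) (P : Set W) : W → W → Prop :=
  Relation.ReflTransGen
    (fun x y => x ∈ P ∧ y ∈ P ∧ ∃ a ∈ h.Cspan P, h.C.repr (h.C y * a) x ≠ 0)

/-- The preorder `≤_LR`. -/
def lrLE (h : Hecke cs 𝔄 φ H) (P : Set W) : W → W → Prop :=
  Relation.ReflTransGen
    (fun x y => x ∈ P ∧ y ∈ P ∧
      ∃ a ∈ h.Cspan P, ∃ b ∈ h.Cspan P, h.C.repr (a * h.C y * b) x ≠ 0)

/-- The equivalence `∼_L`; its classes are the left cells. -/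
def leftEquiv (h : Hecke cs 𝔄 φ H) (P : Set W) (x y : W) : Prop :=
  h.leftLE P x y ∧ h.leftLE P y x

/-- The equivalence `∼_R`; its classes are the right cells. -/
def rightEquiv (h : Hecke cs 𝔄 φ H) (P : Set W) (x y : W) : Prop :=
  h.rightLE P x y ∧ h.rightLE P y x

/-- The equivalence `∼_LR`; its classes are the two-sided cells. -/
def lrEquiv (h : Hecke cs 𝔄 φ H) (P : Set W) (x y : W) : Prop :=
  h.lrLE P x y ∧ h.lrLE P y x

/-- `Γ` is a left cell. -/
def IsLeftCell (h : Hecke cs 𝔄 φ H) (P : Set W) (Γ : Set W) : Prop :=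
  ∃ w ∈ P, Γ = {x | h.leftEquiv P x w}

/-- `Γ` is a right cell. -/
def IsRightCell (h : Hecke cs 𝔄 φ H) (P : Set W) (Γ : Set W) : Prop :=
  ∃ w ∈ P, Γ = {x | h.rightEquiv P x w}

/-- A sign map `W → {1,-1}`. -/
def IsSignMap (μ : W → ℤ) : Prop := ∀ w : W, μ w = 1 ∨ μ w = -1

/-- `(δ,μ)` is a *left cellular pair* for `(W_P, P, φ_P)` (Definition 4.1 of the paper;
take `P = Set.univ` for `(W,S,φ)`):  for every left cell `Γ`, (LC1) `δ(Γ)` is a left cell,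
and (LC2) the `A`-linear map `H^L[Γ] → H^L[δ(Γ)]`, `c_w^L ↦ μ_w c_{δ(w)}^L`, is an
isomorphism of left `H`-modules.  Condition (LC2) is expressed concretely: `δ` is injective
on `Γ` (bijectivity of the map) and for every `a ∈ H` the coefficient of `c_{w'}` in
`a ⬝ c_w` agrees, up to the signs, with that of `c_{δ(w')}` in `a ⬝ c_{δ(w)}`
(`H`-equivariance in the cell modules). -/
def IsLeftCellularPair (h : Hecke cs 𝔄 φ H) (P : Set W) (δ : W → W) (μ : W → ℤ) : Prop :=
  IsSignMap μ ∧
  ∀ Γ : Set W, h.IsLeftCell P Γ →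
    h.IsLeftCell P (δ '' Γ) ∧ Set.InjOn δ Γ ∧
    ∀ a ∈ h.Cspan P, ∀ w ∈ Γ, ∀ w' ∈ Γ,
      h.C.repr (a * h.C w) w' = (μ w * μ w') • h.C.repr (a * h.C (δ w)) (δ w')

/-- `(δ,μ)` is a *right cellular pair*. -/
def IsRightCellularPair (h : Hecke cs 𝔄 φ H) (P : Set W) (δ : W → W) (μ : W → ℤ) : Prop :=
  IsSignMap μ ∧
  ∀ Γ : Set W, h.IsRightCell P Γ →
    h.IsRightCell P (δ '' Γ) ∧ Set.InjOn δ Γ ∧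
    ∀ a ∈ h.Cspan P, ∀ w ∈ Γ, ∀ w' ∈ Γ,
      h.C.repr (h.C w * a) w' = (μ w * μ w') • h.C.repr (h.C (δ w) * a) (δ w')

/-- `(δ,μ)` is a *strongly left cellular pair*: left cellular, and (LC3) `δ(w) ∼_R w`. -/
def IsStronglyLeftCellularPair (h : Hecke cs 𝔄 φ H) (P : Set W) (δ : W → W) (μ : W → ℤ) :
    Prop :=
  h.IsLeftCellularPair P δ μ ∧ ∀ w ∈ P, h.rightEquiv P (δ w) w

/-- `(δ,μ)` is a *strongly right cellular pair*: right cellular, and `δ(w) ∼_L w`. -/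
def IsStronglyRightCellularPair (h : Hecke cs 𝔄 φ H) (P : Set W) (δ : W → W) (μ : W → ℤ) :
    Prop :=
  h.IsRightCellularPair P δ μ ∧ ∀ w ∈ P, h.leftEquiv P (δ w) w

/-- `a` is Lusztig's `a`-function of `(W_P, P, φ_P)`:
`a(z) = max_{x,y ∈ W_P} deg h_{x,y,z}`. -/
def IsAFun (h : Hecke cs 𝔄 φ H) (P : Set W) (a : W → 𝔄) : Prop :=
  ∀ z ∈ P, IsGreatest
    {d : 𝔄 | ∃ x ∈ P, ∃ y ∈ P, d ∈ (h.C.repr (h.C x * h.C y) z).coeff.support} (a z)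

/-- Lusztig's Conjecture P1 for `(W_P, P, φ_P)`: `a(z) ≤ Δ(z) = -val p*_{1,z}`. -/
def ConjP1 (h : Hecke cs 𝔄 φ H) (P : Set W) (a : W → 𝔄) : Prop :=
  ∀ z ∈ P, ∃ d ∈ (h.T.repr (h.C z) 1).coeff.support, d ≤ -(a z)

/-- Lusztig's Conjecture P4 for `(W_P, P, φ_P)`: `z' ≤_LR z ⟹ a(z') ≥ a(z)`. -/
def ConjP4 (h : Hecke cs 𝔄 φ H) (P : Set W) (a : W → 𝔄) : Prop :=
  ∀ z z' : W, z ∈ P → z' ∈ P → h.lrLE P z' z → a z ≤ a z'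

/-- Lusztig's Conjecture P8 for `(W_P, P, φ_P)`: `h_{x,y,z} ≠ 0` implies
`x ∼_L y⁻¹`, `y ∼_L z` and `x ∼_R z`. -/
def ConjP8 (h : Hecke cs 𝔄 φ H) (P : Set W) : Prop :=
  ∀ x y z : W, x ∈ P → y ∈ P → z ∈ P → h.C.repr (h.C x * h.C y) z ≠ 0 →
    h.leftEquiv P x y⁻¹ ∧ h.leftEquiv P y z ∧ h.rightEquiv P x z

/-- Lusztig's Conjecture P9 for `(W_P, P, φ_P)`: `z' ≤_L z` and `a(z') = a(z)` imply
`z' ∼_L z`. -/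
def ConjP9 (h : Hecke cs 𝔄 φ H) (P : Set W) (a : W → 𝔄) : Prop :=
  ∀ z z' : W, z ∈ P → z' ∈ P → h.leftLE P z' z → a z' = a z → h.leftEquiv P z' z

/-- `w0` is the longest element of `W_P`. -/
def IsLongest (cs : CoxeterSystem M W) (P : Set W) (w0 : W) : Prop :=
  w0 ∈ P ∧ ∀ u ∈ P, cs.length u ≤ cs.length w0

/-- The characterization of the Mathas–Lusztig maps `λ_I`, `ρ_I`, `η^I` of
`(W_I, I, φ_I)` (Theorem 4.3 of the paper), for `P = W_I`, `wI` the longest element of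
`W_I` and `aI` Lusztig's `a`-function of `(W_I, I, φ_I)`:
`v^{α_I(w)} T_{w_I} C_w ≡ η^I_w C_{ρ_I(w)}` and
`v^{α_I(w)} C_w T_{w_I} ≡ η^I_w C_{λ_I(w)}` modulo `H_I^{<_LR w}`, where
`α_I(w) = a_I(w_I w) - a_I(w)`. -/
def IsMLTriple (h : Hecke cs 𝔄 φ H) (P : Set W) (wI : W) (aI : W → 𝔄)
    (lam rho : W → W) (η : W → ℤ) : Prop :=
  IsSignMap η ∧
  (∀ w ∈ P, lam w ∈ P ∧ rho w ∈ P) ∧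
  ∀ w ∈ P,
    v (aI (wI * w) - aI w) • (h.T wI * h.C w) - η w • h.C (rho w) ∈
      Submodule.span (GA 𝔄)
        (h.C '' {u | u ∈ P ∧ h.lrLE P u w ∧ ¬ h.lrLE P w u}) ∧
    v (aI (wI * w) - aI w) • (h.C w * h.T wI) - η w • h.C (lam w) ∈
      Submodule.span (GA 𝔄)
        (h.C '' {u | u ∈ P ∧ h.lrLE P u w ∧ ¬ h.lrLE P w u})

end Hecke

section

open AddMonoidAlgebra

lemma aneg_iff_supDegree_lt_zero (a : GA 𝔄) : Aneg a ↔ a.supDegree WithBot.some < 0 := by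
  rw [Aneg, supDegree, Finset.sup_lt_iff (WithBot.bot_lt_coe 0)]
  simp

lemma add_lt_coe_of_le_coe_of_neg {a b : WithBot 𝔄} {γ : 𝔄} (ha : a ≤ γ) (hb : b < 0) :
    a + b < γ := by
  induction a using WithBot.recBotCoe with
  | bot => exact WithBot.bot_lt_coe γ
  | coe a =>
    induction b using WithBot.recBotCoe with
    | bot => exact WithBot.bot_lt_coe γ
    | coe b =>
      norm_cast at *
      exact add_lt_of_le_of_neg ha hb

lemma v_mul_v (γ δ : 𝔄) : v γ * v δ = v (γ + δ) := by
  simp [v, single_mul_single]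

lemma supDegree_ite_v_sub_v_neg_le {γ : 𝔄} (hγ : 0 ≤ γ) (P : Prop) [Decidable P] :
    (if P then v γ - v (-γ) else 0).supDegree WithBot.some ≤ γ := by
  split_ifs
  · refine supDegree_sub_le.trans (sup_le ?_ ?_) <;>
      simp only [v, supDegree_single, one_ne_zero, if_false, WithBot.coe_le_coe]
    · exact le_rfl
    · exact neg_le_self hγ
  · simp

lemma coeff_ite_v_sub_v_neg_self {γ : 𝔄} (hγ : 0 < γ) (P : Prop) [Decidable P] :
    (if P then v γ - v (-γ) else 0).coeff γ = if P then 1 else 0 := by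
  split_ifs
  · simp [v, (neg_lt_self hγ).ne]
  · rfl

lemma iff_of_ite_eq_ite {P Q : Prop} [Decidable P] [Decidable Q]
    (hPQ : (if P then (1 : ℤ) else 0) = if Q then 1 else 0) : P ↔ Q := by
  by_cases hP : P <;> by_cases hQ : Q <;> simp_all

lemma repr_map_eq_of_involutive {ι R M : Type*} [CommSemiring R] [AddCommMonoid M] [Module R M]
    (b : Module.Basis ι R M) (L : M →ₗ[R] M) {σ : ι → ι} (hσ : σ.Involutive) (c : ι → R)
    (hL : ∀ i, L (b i) = b (σ i) + c i • b i) (x : M) (j : ι) :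
    b.repr (L x) j = b.repr x (σ j) + c j * b.repr x j := by
  have key : Finsupp.lapply j ∘ₗ b.repr.toLinearMap ∘ₗ L =
      (Finsupp.lapply (σ j) + c j • Finsupp.lapply j) ∘ₗ b.repr.toLinearMap :=
    b.ext fun i => by
      rcases eq_or_ne i j with rfl | hij
      · simp [hL, Finsupp.single_apply, eq_comm]
      · simp [hL, Finsupp.single_apply, hij, hσ.eq_iff]
  simpa using LinearMap.congr_fun key x

end

namespace Hecke

variable {cs : CoxeterSystem M W} {φ : B → 𝔄} {H : Type*} [Ring H] [Module (GA 𝔄) H]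

section

open AddMonoidAlgebra

variable (h : Hecke cs 𝔄 φ H)

lemma T_simple_mul_T_simple (i : B) :
    h.T (cs.simple i) * h.T (cs.simple i) = 1 + (v (φ i) - v (-φ i)) • h.T (cs.simple i) := by
  have hq := h.T_quad i
  rw [sub_mul, mul_add, mul_add, h.mul_smul, h.smul_mul, h.smul_mul, h.mul_smul, mul_one,
    one_mul, one_mul, smul_smul, v_mul_v, add_neg_cancel, show v (0 : 𝔄) = 1 from rfl,
    one_smul] at hq
  rw [← sub_eq_zero, ← hq, sub_smul]
  abel

lemma T_simple_mul (i : B) (w : W) :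
    h.T (cs.simple i) * h.T w = h.T (cs.simple i * w) +
      (if cs.length (cs.simple i * w) < cs.length w then v (φ i) - v (-φ i) else 0) • h.T w := by
  split_ifs with hw
  · have hlen : cs.length (cs.simple i * (cs.simple i * w)) =
        cs.length (cs.simple i) + cs.length (cs.simple i * w) := by
      have := cs.length_simple_mul w i
      rw [cs.simple_mul_simple_cancel_left, cs.length_simple]
      omega
    have hTw := h.T_mul _ _ hlen
    rw [cs.simple_mul_simple_cancel_left] at hTw
    rw [← hTw, ← mul_assoc, T_simple_mul_T_simple, add_mul, one_mul, h.smul_mul]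
  · rw [zero_smul, add_zero]
    refine h.T_mul _ _ ?_
    rw [cs.length_simple]
    have := cs.length_simple_mul w i
    omega

lemma T_mul_simple (w : W) (i : B) :
    h.T w * h.T (cs.simple i) = h.T (w * cs.simple i) +
      (if cs.length (w * cs.simple i) < cs.length w then v (φ i) - v (-φ i) else 0) • h.T w := by
  split_ifs with hw
  · have hlen : cs.length (w * cs.simple i * cs.simple i) =
        cs.length (w * cs.simple i) + cs.length (cs.simple i) := by
      have := cs.length_mul_simple w i
      rw [cs.simple_mul_simple_cancel_right, cs.length_simple]
      omega
    have hTw := h.T_mul _ _ hlen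
    rw [cs.simple_mul_simple_cancel_right] at hTw
    rw [← hTw, mul_assoc, T_simple_mul_T_simple, mul_add, mul_one, h.mul_smul]
  · rw [zero_smul, add_zero]
    refine h.T_mul _ _ ?_
    rw [cs.length_simple]
    have := cs.length_mul_simple w i
    omega

lemma T_repr_sub_C_repr (z : H) (u : W) :
    h.T.repr z u - h.C.repr z u =
      Finsupp.linearCombination (GA 𝔄) (fun y => h.T.repr (h.C y - h.T y) u) (h.C.repr z) := by
  have key : Finsupp.lapply u ∘ₗ (h.T.repr.toLinearMap - h.C.repr.toLinearMap) =
      Finsupp.linearCombination (GA 𝔄) (fun y => h.T.repr (h.C y - h.T y) u) ∘ₗ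
        h.C.repr.toLinearMap :=
    h.C.ext fun w => by simp
  simpa using LinearMap.congr_fun key z

lemma supDegree_T_repr_sub_C_repr_lt {z : H} {γ : 𝔄}
    (hz : ∀ y, (h.C.repr z y).supDegree WithBot.some ≤ γ) (u : W) :
    (h.T.repr z u - h.C.repr z u).supDegree WithBot.some < γ := by
  rw [T_repr_sub_C_repr, Finsupp.linearCombination_apply, Finsupp.sum]
  refine supDegree_sum_le.trans_lt ((Finset.sup_lt_iff (WithBot.bot_lt_coe γ)).2 fun y _ => ?_)
  rw [smul_eq_mul]
  exact (supDegree_mul_le (D := WithBot.some) fun _ _ => WithBot.coe_add _ _).trans_lt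
    (add_lt_coe_of_le_coe_of_neg (hz y) ((aneg_iff_supDegree_lt_zero _).1 (h.C_T y u)))

lemma supDegree_C_repr_le {z : H} {γ : 𝔄}
    (hz : ∀ u, (h.T.repr z u).supDegree WithBot.some ≤ γ) (y : W) :
    (h.C.repr z y).supDegree WithBot.some ≤ γ := by
  obtain ⟨y₀, hmax⟩ : ∃ y₀, ∀ y, (h.C.repr z y).supDegree WithBot.some ≤
      (h.C.repr z y₀).supDegree WithBot.some := by
    rcases (h.C.repr z).support.eq_empty_or_nonempty with hempty | hne
    · exact ⟨y, fun y' => by simp [Finsupp.support_eq_empty.1 hempty]⟩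
    · obtain ⟨y₀, -, hy₀⟩ := Finset.exists_max_image _
        (fun y => (h.C.repr z y).supDegree WithBot.some) hne
      refine ⟨y₀, fun y' => ?_⟩
      by_cases hy' : y' ∈ (h.C.repr z).support
      · exact hy₀ y' hy'
      · simp [Finsupp.notMem_support_iff.1 hy']
  refine (hmax y).trans (not_lt.1 fun hlt => ?_)
  obtain ⟨δ, hδ, hdeg⟩ := exists_supDegree_mem_support (D := WithBot.some)
    (ne_zero_of_not_supDegree_le hlt.not_ge)
  rw [hdeg] at hmax hlt
  have hT : (h.T.repr z y₀).coeff δ = 0 :=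
    coeff_eq_zero_of_not_le_supDegree ((hz y₀).trans_lt hlt).not_ge
  have hdiff : (h.T.repr z y₀ - h.C.repr z y₀).coeff δ = 0 :=
    coeff_eq_zero_of_not_le_supDegree (supDegree_T_repr_sub_C_repr_lt h hmax y₀).not_ge
  rw [coeff_sub, Finsupp.sub_apply, hT, zero_sub, neg_eq_zero] at hdiff
  exact Finsupp.mem_support_iff.1 hδ hdiff

lemma coeff_C_repr_eq_coeff_T_repr {z : H} {γ : 𝔄}
    (hz : ∀ u, (h.T.repr z u).supDegree WithBot.some ≤ γ) (u : W) :
    (h.C.repr z u).coeff γ = (h.T.repr z u).coeff γ := by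
  have hdiff := coeff_eq_zero_of_not_le_supDegree
    (supDegree_T_repr_sub_C_repr_lt h (h.supDegree_C_repr_le hz) u).not_ge
  rw [coeff_sub, Finsupp.sub_apply, sub_eq_zero] at hdiff
  exact hdiff.symm

lemma T_repr_C_eq (y u : W) :
    h.T.repr (h.C y) u = (if y = u then 1 else 0) + h.T.repr (h.C y - h.T y) u := by
  simp [Finsupp.single_apply]

lemma supDegree_T_repr_C_le (y u : W) : (h.T.repr (h.C y) u).supDegree WithBot.some ≤ 0 := by
  rw [T_repr_C_eq]
  refine supDegree_add_le.trans (sup_le ?_ ((aneg_iff_supDegree_lt_zero _).1 (h.C_T y u)).le)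
  split_ifs
  · simp [one_def]
  · simp

lemma coeff_C_repr_map_C_self (L : H →ₗ[GA 𝔄] H) {σ : W → W} (hσ : σ.Involutive)
    {c : W → GA 𝔄} {γ : 𝔄} (hγ : 0 < γ) (hc : ∀ w, (c w).supDegree WithBot.some ≤ γ)
    (hL : ∀ w, L (h.T w) = h.T (σ w) + c w • h.T w) (x : W) :
    (h.C.repr (L (h.C x)) x).coeff γ = (c x).coeff γ := by
  have hp (u : W) : (h.T.repr (h.C x) u).supDegree WithBot.some < γ :=
    (h.supDegree_T_repr_C_le x u).trans_lt (WithBot.coe_lt_coe.2 hγ)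
  have hcp (u : W) : (c u * h.T.repr (h.C x) u).supDegree WithBot.some ≤ γ := by
    refine (supDegree_mul_le (D := WithBot.some) fun _ _ => WithBot.coe_add _ _).trans ?_
    simpa using add_le_add (hc u) (h.supDegree_T_repr_C_le x u)
  have hcn : (c x * h.T.repr (h.C x - h.T x) x).supDegree WithBot.some < γ :=
    (supDegree_mul_le (D := WithBot.some) fun _ _ => WithBot.coe_add _ _).trans_lt
      (add_lt_coe_of_le_coe_of_neg (hc x) ((aneg_iff_supDegree_lt_zero _).1 (h.C_T x x)))
  have hLx := repr_map_eq_of_involutive h.T L hσ c hL (h.C x)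
  have hdeg (u : W) : (h.T.repr (L (h.C x)) u).supDegree WithBot.some ≤ γ := by
    rw [hLx]
    exact supDegree_add_le.trans (sup_le (hp (σ u)).le (hcp u))
  rw [h.coeff_C_repr_eq_coeff_T_repr hdeg, hLx, h.T_repr_C_eq x x, if_pos rfl,
    mul_add, mul_one, coeff_add, coeff_add, Finsupp.add_apply, Finsupp.add_apply,
    coeff_eq_zero_of_not_le_supDegree (hp (σ x)).not_ge,
    coeff_eq_zero_of_not_le_supDegree hcn.not_ge, zero_add, add_zero]

lemma coeff_C_repr_T_simple_mul_C_self (i : B) (x : W) :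
    (h.C.repr (h.T (cs.simple i) * h.C x) x).coeff (φ i) =
      if cs.length (cs.simple i * x) < cs.length x then 1 else 0 := by
  let mulT : H →ₗ[GA 𝔄] H :=
    { toFun := (h.T (cs.simple i) * ·), map_add' := mul_add _,
      map_smul' := fun a z => h.mul_smul a _ z }
  rw [← coeff_ite_v_sub_v_neg_self (h.φ_pos i)]
  exact h.coeff_C_repr_map_C_self mulT (fun w => cs.simple_mul_simple_cancel_left i) (h.φ_pos i)
    (fun w => supDegree_ite_v_sub_v_neg_le (h.φ_pos i).le _) (h.T_simple_mul i) x

lemma coeff_C_repr_C_mul_T_simple_self (i : B) (x : W) :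
    (h.C.repr (h.C x * h.T (cs.simple i)) x).coeff (φ i) =
      if cs.length (x * cs.simple i) < cs.length x then 1 else 0 := by
  let mulT : H →ₗ[GA 𝔄] H :=
    { toFun := (· * h.T (cs.simple i)), map_add' := fun _ _ => add_mul _ _ _,
      map_smul' := fun a z => h.smul_mul a z _ }
  rw [← coeff_ite_v_sub_v_neg_self (h.φ_pos i)]
  exact h.coeff_C_repr_map_C_self mulT (fun w => cs.simple_mul_simple_cancel_right i) (h.φ_pos i)
    (fun w => supDegree_ite_v_sub_v_neg_le (h.φ_pos i).le _) (fun w => h.T_mul_simple w i) x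

lemma cspan_univ : h.Cspan Set.univ = ⊤ := by
  rw [Cspan, Set.image_univ, h.C.span_eq]

lemma C_repr_mul_C_self_eq_of_isLeftCellularPair {δ : W → W} {μ : W → ℤ}
    (hδ : h.IsLeftCellularPair Set.univ δ μ) (a : H) (w : W) :
    h.C.repr (a * h.C w) w = h.C.repr (a * h.C (δ w)) (δ w) := by
  obtain ⟨hμ, hcell⟩ := hδ
  have hw : w ∈ {x | h.leftEquiv Set.univ x w} := ⟨.refl, .refl⟩
  have hμw : μ w * μ w = 1 := by rcases hμ w with hμw | hμw <;> simp [hμw]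
  simpa [hμw] using (hcell _ ⟨w, trivial, rfl⟩).2.2 a (h.cspan_univ ▸ trivial) w hw w hw

lemma C_repr_C_mul_self_eq_of_isRightCellularPair {δ : W → W} {μ : W → ℤ}
    (hδ : h.IsRightCellularPair Set.univ δ μ) (a : H) (w : W) :
    h.C.repr (h.C w * a) w = h.C.repr (h.C (δ w) * a) (δ w) := by
  obtain ⟨hμ, hcell⟩ := hδ
  have hw : w ∈ {x | h.rightEquiv Set.univ x w} := ⟨.refl, .refl⟩
  have hμw : μ w * μ w = 1 := by rcases hμ w with hμw | hμw <;> simp [hμw]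
  simpa [hμw] using (hcell _ ⟨w, trivial, rfl⟩).2.2 a (h.cspan_univ ▸ trivial) w hw w hw

end

/-- **Proposition 4.3** (cells and cacti): let `(δ,μ)` be a left (respectively right)
cellular pair and `w ∈ W`.  Then `ℒ(δ(w)) = ℒ(w)` (respectively `ℛ(δ(w)) = ℛ(w)`),
where `ℒ(w) = {s ∈ S | ℓ(sw) < ℓ(w)}` and `ℛ(w) = {s ∈ S | ℓ(ws) < ℓ(w)}` are the left
and right descent sets. -/
theorem prop_left_descent (h : Hecke cs 𝔄 φ H) (δ : W → W) (μ : W → ℤ) (w : W) :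
    (h.IsLeftCellularPair Set.univ δ μ →
      ∀ i : B, cs.length (cs.simple i * δ w) < cs.length (δ w) ↔
        cs.length (cs.simple i * w) < cs.length w) ∧
    (h.IsRightCellularPair Set.univ δ μ →
      ∀ i : B, cs.length (δ w * cs.simple i) < cs.length (δ w) ↔
        cs.length (w * cs.simple i) < cs.length w) := by
  refine ⟨fun hδ i => iff_of_ite_eq_ite ?_, fun hδ i => iff_of_ite_eq_ite ?_⟩
  · rw [← h.coeff_C_repr_T_simple_mul_C_self, ← h.coeff_C_repr_T_simple_mul_C_self,
      h.C_repr_mul_C_self_eq_of_isLeftCellularPair hδ _ w]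
  · rw [← h.coeff_C_repr_C_mul_T_simple_self, ← h.coeff_C_repr_C_mul_T_simple_self,
      h.C_repr_C_mul_self_eq_of_isRightCellularPair hδ _ w]

end Hecke

end CellsCacti
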